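/- For positive integers α ≥ β, the following rational identity holds: ∑_{j=0}^{α-β} (1/(j+β)) · C(-α-1, j) · C(α-β, j) = ∑_{j=0}^{β-1} ((-1)^{1+α}/(j+1+α-β)) · C(-α-1, j) · C(β-1, j). -/

import Mathlib

/-!
Write `α = N = n + m + 1` and `β = m + 1`; then `C(-α-1,j) = (-1)^j C(N+j,j)` and
`C(N+j,j)/(j+m+1) = n! m!/N! · C(N+j,n) C(m+j,j)`. So, up to the common factor `n! m!/N!` and a
sign, the left side is `∑_j (-1)^(n-j) C(n,j) C(N+j,n) C(m+j,j)` and the right side is the same sum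
with `n` and `m` exchanged. Expanding `C(m+j,j) = ∑_k C(j,k) C(m,k)` (Vandermonde) and summing over
`j` first with the forward-difference identity `∑_i (-1)^(p-i) C(p,i) C(q+i,p+k) = C(q,k)` turns
this sum into `∑_k C(n,k) C(m,k) C(N+k,k)`, which is symmetric in `n` and `m`.
-/

/-- Generalized binomial coefficient `C(x,k) = x(x-1)⋯(x-k+1)/k!` for rational `x`. -/
def gbinom (x : ℚ) (k : ℕ) : ℚ := (∏ i ∈ Finset.range k, (x - i)) / (Nat.factorial k)

open Finset Nat

theorem gbinom_eq_ringChoose (x : ℚ) (k : ℕ) : gbinom x k = Ring.choose x k := by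
  rw [Ring.choose_eq_smul, gbinom, ← descPochhammer_eval_eq_prod_range, ← descPochhammer_map
    (Int.castRingHom ℚ), Polynomial.eval_map, ← Polynomial.aeval_eq_smeval, Polynomial.aeval_def,
    algebraMap_int_eq, smul_eq_mul, div_eq_inv_mul]

theorem gbinom_natCast (n k : ℕ) : gbinom n k = n.choose k := by
  rw [gbinom_eq_ringChoose, Ring.choose_natCast]

theorem gbinom_neg_natCast_sub_one (a k : ℕ) :
    gbinom (-(a : ℚ) - 1) k = (-1) ^ k * (a + k).choose k := by
  rw [gbinom_eq_ringChoose, ← neg_add', Ring.choose_neg, add_right_comm, add_sub_cancel_right,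
    ← Nat.cast_add, Ring.choose_natCast, Int.negOnePow_def, Units.smul_def]
  simp

variable {R : Type*}

section CommSemiring

variable [CommSemiring R]

theorem sum_range_choose_mul_eq_of_lt (f : ℕ → R) {n N : ℕ} (h : n < N) :
    ∑ k ∈ range N, (n.choose k : R) * f k = ∑ k ∈ range (n + 1), (n.choose k : R) * f k := by
  obtain ⟨d, rfl⟩ := Nat.exists_eq_add_of_lt h
  rw [add_right_comm, sum_range_add, sum_eq_zero (s := range d) fun k _ ↦ by
    simp [Nat.choose_eq_zero_of_lt (by omega : n < n + 1 + k)], add_zero]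

theorem add_choose_eq_sum_range (m j n : ℕ) (h : j ≤ n) :
    ((m + j).choose j : R) = ∑ k ∈ range (n + 1), (j.choose k : R) * m.choose k := by
  rw [sum_range_choose_mul_eq_of_lt _ (by omega : j < n + 1), Nat.add_choose_eq,
    Nat.sum_antidiagonal_eq_sum_range_succ_mk]
  push_cast
  refine sum_congr rfl fun k hk ↦ ?_
  rw [Nat.choose_symm (by simpa [Nat.lt_succ_iff] using hk)]
  ring

end CommSemiring

section CommRing

variable [CommRing R]

theorem sum_neg_one_pow_mul_choose_mul_add_choose (p j q : ℕ) :
    ∑ i ∈ range (p + 1), (-1 : R) ^ (p - i) * p.choose i * (q + i).choose (p + j) = q.choose j := by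
  have h := fwdDiff_iter_eq_sum_shift 1 (fun x ↦ (x.choose (p + j) : ℤ)) p q
  rw [fwdDiff_iter_choose] at h
  simpa [smul_eq_mul] using congrArg (Int.cast : ℤ → R) h.symm

theorem sum_neg_one_pow_mul_choose_mul_choose_mul_add_choose (n k q : ℕ) :
    ∑ j ∈ range (n + 1), (-1 : R) ^ (n - j) * n.choose j * j.choose k * (q + j).choose n =
      n.choose k * (q + k).choose k := by
  rcases lt_or_ge n k with hnk | hkn
  · rw [Nat.choose_eq_zero_of_lt hnk, Nat.cast_zero, zero_mul]
    refine sum_eq_zero fun j hj ↦ ?_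
    rw [Nat.choose_eq_zero_of_lt (by simp at hj; omega : j < k)]
    simp
  obtain ⟨p, rfl⟩ := Nat.exists_eq_add_of_le hkn
  rw [add_assoc, sum_range_add, sum_eq_zero fun j hj ↦ by
    simp [Nat.choose_eq_zero_of_lt (mem_range.1 hj)], zero_add]
  calc ∑ i ∈ range (p + 1), (-1 : R) ^ (k + p - (k + i)) * (k + p).choose (k + i) *
          (k + i).choose k * (q + (k + i)).choose (k + p)
      = ∑ i ∈ range (p + 1), ((k + p).choose k : R) *
          ((-1 : R) ^ (p - i) * p.choose i * (q + k + i).choose (p + k)) := by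
        refine sum_congr rfl fun i _ ↦ ?_
        have h := Nat.choose_mul (n := k + p) (Nat.le_add_right k i)
        simp only [Nat.add_sub_cancel_left] at h
        rw [Nat.add_sub_add_left, mul_assoc _ (((k + p).choose (k + i) : ℕ) : R), ← Nat.cast_mul, h,
          add_assoc q, add_comm p k]
        push_cast
        ring
    _ = (k + p).choose k * (q + k).choose k := by
        rw [← mul_sum, sum_neg_one_pow_mul_choose_mul_add_choose]

theorem sum_neg_one_pow_mul_choose_mul_add_choose_mul_add_choose (n m q : ℕ) {N : ℕ}
    (hN : n < N) :
    ∑ j ∈ range (n + 1), (-1 : R) ^ (n - j) * n.choose j * (q + j).choose n * (m + j).choose j =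
      ∑ k ∈ range N, (n.choose k : R) * (m.choose k * (q + k).choose k) := by
  rw [sum_range_choose_mul_eq_of_lt _ hN]
  calc _ = ∑ j ∈ range (n + 1), ∑ k ∈ range (n + 1),
          (m.choose k : R) * ((-1) ^ (n - j) * n.choose j * j.choose k * (q + j).choose n) := by
        refine sum_congr rfl fun j hj ↦ ?_
        rw [add_choose_eq_sum_range m j n (Nat.lt_succ_iff.1 (mem_range.1 hj)), mul_sum]
        exact sum_congr rfl fun k _ ↦ by ring
    _ = _ := by
        rw [sum_comm]
        refine sum_congr rfl fun k _ ↦ ?_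
        rw [← mul_sum, sum_neg_one_pow_mul_choose_mul_choose_mul_add_choose]
        ring

end CommRing

theorem add_choose_div_eq_mul_choose_mul_choose (n m j : ℕ) :
    ((n + m + 1 + j).choose j : ℚ) / (j + m + 1) =
      n ! * m ! / (n + m + 1)! * ((n + m + 1 + j).choose n * (m + j).choose j) := by
  rw [Nat.cast_choose ℚ (by omega : j ≤ n + m + 1 + j),
    Nat.cast_choose ℚ (by omega : n ≤ n + m + 1 + j), Nat.cast_choose ℚ (by omega : j ≤ m + j),
    show n + m + 1 + j - j = n + m + 1 by omega, show n + m + 1 + j - n = m + j + 1 by omega,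
    Nat.add_sub_cancel, Nat.factorial_succ (m + j)]
  field_simp
  push_cast
  ring

theorem sum_neg_one_pow_mul_add_choose_mul_choose_div (n m : ℕ) {N : ℕ} (hN : n + m + 1 = N) :
    ∑ j ∈ range (n + 1), (-1 : ℚ) ^ j * (N + j).choose j * n.choose j / (j + m + 1) =
      (-1) ^ n * (n ! * m ! / N !) *
        ∑ k ∈ range N, (n.choose k * (m.choose k * (N + k).choose k) : ℚ) := by
  subst hN
  rw [← sum_neg_one_pow_mul_choose_mul_add_choose_mul_add_choose n m (n + m + 1) (by omega),
    mul_sum]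
  refine sum_congr rfl fun j hj ↦ ?_
  have hsign : (-1 : ℚ) ^ j = (-1) ^ n * (-1) ^ (n - j) := by
    rw [← pow_add, show n + (n - j) = j + 2 * (n - j) by simp at hj; omega, pow_add, pow_mul]
    norm_num
  rw [mul_div_right_comm, mul_div_assoc, add_choose_div_eq_mul_choose_mul_choose, hsign]
  ring

/-- Lemma 1 of the paper: for positive integers `α ≥ β`,
`∑_{j=0}^{α-β} C(-α-1,j) C(α-β,j)/(j+β)
 = ∑_{j=0}^{β-1} (-1)^{1+α} C(-α-1,j) C(β-1,j)/(j+1+α-β)`. -/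
theorem lemma_abj (α β : ℕ) (hβ : 1 ≤ β) (hβα : β ≤ α) :
    ∑ j ∈ Finset.range (α - β + 1),
        (1 / ((j : ℚ) + β)) * gbinom (-(α : ℚ) - 1) j * gbinom ((α : ℚ) - β) j
      = ∑ j ∈ Finset.range β,
        ((-1 : ℚ)^(1 + α) / ((j : ℚ) + 1 + α - β)) * gbinom (-(α : ℚ) - 1) j
          * gbinom ((β : ℚ) - 1) j := by
  obtain ⟨m, rfl⟩ : ∃ m, β = m + 1 := ⟨β - 1, by omega⟩
  obtain ⟨n, rfl⟩ : ∃ n, α = n + m + 1 := ⟨α - (m + 1), by omega⟩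
  have hn : ((n + m + 1 : ℕ) : ℚ) - (m + 1 : ℕ) = n := by push_cast; ring
  have hsymm : ∑ k ∈ range (n + m + 1), (m.choose k * (n.choose k * (n + m + 1 + k).choose k) : ℚ) =
      ∑ k ∈ range (n + m + 1), (n.choose k * (m.choose k * (n + m + 1 + k).choose k) : ℚ) :=
    sum_congr rfl fun k _ ↦ mul_left_comm _ _ _
  have hsign : (-1 : ℚ) ^ (1 + (n + m + 1)) * (-1) ^ m = (-1) ^ n := by
    rw [← pow_add, show 1 + (n + m + 1) + m = n + 2 * (m + 1) by omega, pow_add, pow_mul]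
    norm_num
  rw [show n + m + 1 - (m + 1) = n by omega]
  calc _ = ∑ j ∈ range (n + 1),
          (-1 : ℚ) ^ j * (n + m + 1 + j).choose j * n.choose j / (j + m + 1) :=
        sum_congr rfl fun j _ ↦ by
          rw [hn, gbinom_neg_natCast_sub_one, gbinom_natCast]; push_cast; ring
    _ = (-1) ^ (1 + (n + m + 1)) * ∑ j ∈ range (m + 1),
          (-1 : ℚ) ^ j * (n + m + 1 + j).choose j * m.choose j / (j + n + 1) := by
        rw [sum_neg_one_pow_mul_add_choose_mul_choose_div n m rfl,
          sum_neg_one_pow_mul_add_choose_mul_choose_div m n (N := n + m + 1) (by omega), hsymm,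
          ← hsign]
        ring
    _ = _ := by
        rw [mul_sum]
        refine sum_congr rfl fun j _ ↦ ?_
        rw [show ((m + 1 : ℕ) : ℚ) - 1 = m by push_cast; ring, gbinom_neg_natCast_sub_one,
          gbinom_natCast]
        push_cast
        ring
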